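/- Let $r_{\max} \geq 1$, let $B \in \mathbb{R}^{m \times r_{\max}}$ and $A \in \mathbb{R}^{r_{\max} \times n}$ be fixed matrices shared by $c \geq 1$ clients, and for each client $i$ let $r_i \leq r_{\max}$ and $R_i \in \mathbb{R}^{r_i \times r_i}$. With $\operatorname{pad}(R_i) \in \mathbb{R}^{r_{\max} \times r_{\max}}$ the zero-padding of $R_i$, $B_i = B[:, :r_i]$ the first $r_i$ columns of $B$, and $A_i = A[:r_i, :]$ the first $r_i$ rows of $A$, the rank-heterogeneous aggregation is exact: $B \left( \frac{1}{c} \sum_{i=1}^{c} \operatorname{pad}(R_i) \right) A = \frac{1}{c} \sum_{i=1}^{c} B_i R_i A_i$. -/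
import Mathlib


/-- Zero-padding of an `rᵢ × rᵢ` matrix into the top-left block of an
`rmax × rmax` matrix. -/
def pad {ri rmax : ℕ} (h : ri ≤ rmax) (R : Matrix (Fin ri) (Fin ri) ℝ) :
    Matrix (Fin rmax) (Fin rmax) ℝ :=
  Matrix.of fun j k =>
    if hj : (j : ℕ) < ri then
      if hk : (k : ℕ) < ri then R ⟨j, hj⟩ ⟨k, hk⟩ else 0
    else 0

lemma sum_castLE {ri rmax : ℕ} (h : ri ≤ rmax) (f : Fin rmax → ℝ)
    (hf : ∀ j : Fin rmax, ¬ (j : ℕ) < ri → f j = 0) :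
    ∑ j, f j = ∑ a : Fin ri, f (Fin.castLE h a) := by
  rw [← Finset.sum_subset (Finset.subset_univ
    (Finset.univ.image (Fin.castLE h))) (by
      intro x _ hx
      apply hf
      intro hlt
      exact hx (Finset.mem_image.mpr ⟨⟨x, hlt⟩, Finset.mem_univ _, rfl⟩))]
  rw [Finset.sum_image (by
    intro a _ b _ hab
    exact Fin.castLE_injective h hab)]

lemma mul_pad_mul {m n ri rmax : ℕ} (h : ri ≤ rmax)
    (B : Matrix (Fin m) (Fin rmax) ℝ) (A : Matrix (Fin rmax) (Fin n) ℝ)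
    (R : Matrix (Fin ri) (Fin ri) ℝ) :
    B * pad h R * A =
      B.submatrix id (Fin.castLE h) * R * A.submatrix (Fin.castLE h) id := by
  ext x y
  simp only [Matrix.mul_apply, Finset.sum_mul, Finset.mul_sum]
  rw [sum_castLE h _ (by
    intro j hj
    apply Finset.sum_eq_zero
    intro k _
    simp [pad, hj])]
  congr 1; ext a
  rw [sum_castLE h _ (by
    intro k hk
    simp [pad, hk])]
  congr 1; ext b
  simp [pad]

theorem fedSB_heterogeneous_exact_aggregation (m n rmax c : ℕ)
    (hmax : 1 ≤ rmax) (hc : 1 ≤ c)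
    (B : Matrix (Fin m) (Fin rmax) ℝ) (A : Matrix (Fin rmax) (Fin n) ℝ)
    (ri : Fin c → ℕ) (h : ∀ i, ri i ≤ rmax)
    (R : (i : Fin c) → Matrix (Fin (ri i)) (Fin (ri i)) ℝ) :
    B * ((c : ℝ)⁻¹ • ∑ i, pad (h i) (R i)) * A =
      (c : ℝ)⁻¹ • ∑ i,
        B.submatrix id (Fin.castLE (h i)) * R i * A.submatrix (Fin.castLE (h i)) id := by
  rw [Matrix.mul_smul, Matrix.smul_mul, Matrix.mul_sum, Matrix.sum_mul]
  congr 1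
  exact Finset.sum_congr rfl fun i _ => mul_pad_mul (h i) B A (R i)
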